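/- Let A be a strictly positive operator on H, T ∈ B_A(H), and P = T^{♯A}T + TT^{♯A}. Then w_A(T)⁴ ≤ (1/4)w_A(T²)² + (1/8)w_A(T²P + PT²) + (1/16)‖P‖_A². -/

import Mathlib

noncomputable section
open Complex ContinuousLinearMap

variable {H : Type*} [NormedAddCommGroup H] [InnerProductSpace ℂ H] [CompleteSpace H]

/-- The `A`-inner product `⟨x,y⟩_A = ⟨Ax,y⟩`. -/
def innA (A : H →L[ℂ] H) (x y : H) : ℂ := inner ℂ (A x) y

/-- The `A`-seminorm of a vector, `‖x‖_A = √⟨x,x⟩_A`. -/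
def vnormA (A : H →L[ℂ] H) (x : H) : ℝ := Real.sqrt (innA A x x).re

/-- The `A`-numerical radius `w_A(T) = sup{|⟨Tx,x⟩_A| : ‖x‖_A = 1}`. -/
def wA (A T : H →L[ℂ] H) : ℝ :=
  sSup {r : ℝ | ∃ x : H, vnormA A x = 1 ∧ r = ‖innA A (T x) x‖}

/-- The `A`-operator seminorm, `sup` over `A`-unit vectors in the closure of the range of `A`. -/
def opNormA (A T : H →L[ℂ] H) : ℝ :=
  sSup {r : ℝ | ∃ x : H, x ∈ closure (Set.range A) ∧ vnormA A x = 1 ∧ r = vnormA A (T x)}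

/-- The `A`-operator seminorm, `sup` over all `A`-unit vectors (used when `A > 0`). -/
def opNormA' (A T : H →L[ℂ] H) : ℝ :=
  sSup {r : ℝ | ∃ x : H, vnormA A x = 1 ∧ r = vnormA A (T x)}

/-- The `A`-Crawford number `c_A(T) = inf{|⟨Tx,x⟩_A| : ‖x‖_A = 1}`. -/
def cA (A T : H →L[ℂ] H) : ℝ :=
  sInf {r : ℝ | ∃ x : H, vnormA A x = 1 ∧ r = ‖innA A (T x) x‖}

/-- The `A`-minimum modulus `m_A(T) = inf{‖Tx‖_A : ‖x‖_A = 1}` (version for `A > 0`). -/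
def mA (A T : H →L[ℂ] H) : ℝ :=
  sInf {r : ℝ | ∃ x : H, vnormA A x = 1 ∧ r = vnormA A (T x)}

/-- `S` is an `A`-adjoint of `T`, i.e. `A S = T* A`. -/
def IsAAdjoint (A T S : H →L[ℂ] H) : Prop :=
  A.comp S = (ContinuousLinearMap.adjoint T).comp A

/-- `A` is strictly positive: positive and `⟨Ax,x⟩ > 0` for all `x ≠ 0`. -/
def StrictPos (A : H →L[ℂ] H) : Prop :=
  A.IsPositive ∧ ∀ x : H, x ≠ 0 → 0 < (innA A x x).re

/-- The inner product on `H ⊕ H`. -/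
def inn2 (u v : H × H) : ℂ := inner ℂ u.1 v.1 + inner ℂ u.2 v.2

/-- `B = diag(A, A)` acting on `H ⊕ H`. -/
def Bop (A : H →L[ℂ] H) : H × H →L[ℂ] H × H := A.prodMap A

/-- The `B`-seminorm on `H ⊕ H`. -/
def vnormB (A : H →L[ℂ] H) (u : H × H) : ℝ := Real.sqrt (inn2 (Bop A u) u).re

/-- The `B`-numerical radius on `H ⊕ H`, where `B = diag(A, A)`. -/
def wB (A : H →L[ℂ] H) (S : H × H →L[ℂ] H × H) : ℝ :=
  sSup {r : ℝ | ∃ u : H × H, vnormB A u = 1 ∧ r = ‖inn2 (Bop A (S u)) u‖}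

/-- The `2 × 2` operator matrix `[[X, Y], [Z, W]]` acting on `H ⊕ H`. -/
def blk (X Y Z W : H →L[ℂ] H) : H × H →L[ℂ] H × H :=
  ((X.comp (ContinuousLinearMap.fst ℂ H H)) + (Y.comp (ContinuousLinearMap.snd ℂ H H))).prod
    ((Z.comp (ContinuousLinearMap.fst ℂ H H)) + (W.comp (ContinuousLinearMap.snd ℂ H H)))

set_option linter.unusedSectionVars false

/-!
Fix an `A`-unit vector `x` and a unimodular `c` with `c ⟨Tx, x⟩_A = |⟨Tx, x⟩_A|`. The operator
`R = c̄ T + c S` is `A`-selfadjoint with `⟨Rx, x⟩_A = 2 |⟨Tx, x⟩_A|`, so Cauchy–Schwarz applied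
twice gives `16 |⟨Tx, x⟩_A|⁴ ≤ ⟨R⁴x, x⟩_A`. Since `R² = D + P` with `D = c̄² T² + c² S²`,
`⟨R⁴x, x⟩_A = ‖Dx‖_A² + ⟨(DP + PD)x, x⟩_A + ‖Px‖_A²`. Here `‖Dx‖_A ≤ w_A(D) ≤ 2 w_A(T²)` because
`D` is `A`-selfadjoint, `⟨(DP + PD)x, x⟩_A ≤ 2 w_A(X)` because `DP + PD = c̄² X + c² X^{♯A}` with
`X = T²P + PT²`, and `‖Px‖_A ≤ ‖P‖_A`.

Writing `A = B*B` turns `⟨·, ·⟩_A` into `⟨B·, B·⟩`, which supplies Cauchy–Schwarz and the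
parallelogram law. The suprema are finite because `‖Rx‖_A^{2ⁿ} ≤ ‖R^{2ⁿ}x‖_A ≤ √‖A‖ ‖x‖ ‖R‖^{2ⁿ}`
for `A`-selfadjoint `R` and `A`-unit `x`, whence `‖Rx‖_A ≤ ‖R‖`.
-/

lemma le_of_forall_pow_two_pow_le_mul {a b K : ℝ} (hb : 0 ≤ b)
    (h : ∀ n : ℕ, a ^ 2 ^ n ≤ K * b ^ 2 ^ n) : a ≤ b := by
  by_contra! hba
  obtain rfl | hb := hb.eq_or_lt
  · linarith [show a ≤ 0 by simpa using h 0]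
  have hq : 1 < a / b := (one_lt_div hb).mpr hba
  obtain ⟨n, hn⟩ := pow_unbounded_of_one_lt K hq
  have : (a / b) ^ 2 ^ n ≤ K := by rw [div_pow, div_le_iff₀ (by positivity)]; exact h n
  linarith [pow_le_pow_right₀ hq.le (Nat.lt_two_pow_self (n := n)).le]

lemma sSup_pow_le_of_forall_pow_le {s : Set ℝ} {n : ℕ} {C : ℝ} (hn : n ≠ 0) (hC : 0 ≤ C)
    (hs : ∀ r ∈ s, 0 ≤ r ∧ r ^ n ≤ C) : sSup s ^ n ≤ C := by
  have hle : sSup s ≤ C ^ (n⁻¹ : ℝ) := by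
    refine Real.sSup_le (fun r hr => ?_) (by positivity)
    rw [← Real.pow_rpow_inv_natCast (hs r hr).1 hn]
    exact Real.rpow_le_rpow (pow_nonneg (hs r hr).1 n) (hs r hr).2 (by positivity)
  calc sSup s ^ n ≤ (C ^ (n⁻¹ : ℝ)) ^ n :=
        pow_le_pow_left₀ (Real.sSup_nonneg fun r hr => (hs r hr).1) hle n
    _ = C := Real.rpow_inv_natCast_pow hC hn

lemma conj_smul_add_smul_mul_self {R : Type*} [Ring R] [Algebra ℂ R] {c : ℂ} (hc : ‖c‖ = 1)
    (a b : R) : (starRingEnd ℂ c • a + c • b) * (starRingEnd ℂ c • a + c • b) =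
      (starRingEnd ℂ (c ^ 2) • a ^ 2 + c ^ 2 • b ^ 2) + (b * a + a * b) := by
  have hcc : starRingEnd ℂ c * c = 1 := by rw [conj_mul', hc]; simp
  have hcc' : c * starRingEnd ℂ c = 1 := by rw [mul_comm, hcc]
  simp only [add_mul, mul_add, smul_mul_smul_comm, sq, map_mul, hcc, hcc', one_smul]
  abel

section InnerA

variable {A : H →L[ℂ] H}

lemma ContinuousLinearMap.IsPositive.exists_innA_eq_inner (hA : A.IsPositive) :
    ∃ B : H →L[ℂ] H, (∀ x y, innA A x y = inner ℂ (B x) (B y)) ∧ ∀ x, vnormA A x = ‖B x‖ := by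
  obtain ⟨B, rfl⟩ := CStarAlgebra.nonneg_iff_eq_star_mul_self.mp ((nonneg_iff_isPositive _).mpr hA)
  have hinner : ∀ x y, innA (star B * B) x y = inner ℂ (B x) (B y) := fun x y => by
    rw [innA, mul_apply_eq_comp, star_eq_adjoint, adjoint_inner_left]
  refine ⟨B, hinner, fun x => ?_⟩
  rw [vnormA, hinner, inner_self_eq_norm_sq_to_K]
  norm_cast
  exact Real.sqrt_sq (norm_nonneg _)

lemma vnormA_nonneg (x : H) : 0 ≤ vnormA A x := Real.sqrt_nonneg _

lemma innA_conj_symm (hA : IsSelfAdjoint A) (x y : H) :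
    starRingEnd ℂ (innA A x y) = innA A y x := by
  rw [innA, innA, inner_conj_symm]
  exact (hA.isSymmetric y x).symm

lemma innA_self (hA : A.IsPositive) (x : H) : innA A x x = ((vnormA A x ^ 2 : ℝ) : ℂ) := by
  obtain ⟨B, hinner, hnorm⟩ := hA.exists_innA_eq_inner
  rw [hinner, hnorm, inner_self_eq_norm_sq_to_K]
  push_cast; rfl

lemma vnormA_sq (hA : A.IsPositive) (x : H) : vnormA A x ^ 2 = (innA A x x).re := by
  rw [innA_self hA, ofReal_re]

lemma norm_innA_le (hA : A.IsPositive) (x y : H) : ‖innA A x y‖ ≤ vnormA A x * vnormA A y := by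
  obtain ⟨B, hinner, hnorm⟩ := hA.exists_innA_eq_inner
  rw [hinner, hnorm, hnorm]
  exact norm_inner_le_norm _ _

lemma vnormA_smul (hA : A.IsPositive) (c : ℂ) (x : H) : vnormA A (c • x) = ‖c‖ * vnormA A x := by
  obtain ⟨B, -, hnorm⟩ := hA.exists_innA_eq_inner
  rw [hnorm, hnorm, map_smul, norm_smul]

lemma vnormA_le_sqrt_norm_mul_norm (x : H) : vnormA A x ≤ √‖A‖ * ‖x‖ := by
  have h : (innA A x x).re ≤ ‖A‖ * ‖x‖ ^ 2 := calc
    (innA A x x).re ≤ ‖A x‖ * ‖x‖ := (re_le_norm _).trans (norm_inner_le_norm _ _)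
    _ ≤ ‖A‖ * ‖x‖ * ‖x‖ := by gcongr; exact A.le_opNorm x
    _ = ‖A‖ * ‖x‖ ^ 2 := by ring
  calc vnormA A x ≤ √(‖A‖ * ‖x‖ ^ 2) := Real.sqrt_le_sqrt h
    _ = √‖A‖ * ‖x‖ := by rw [Real.sqrt_mul (norm_nonneg _), Real.sqrt_sq (norm_nonneg _)]

lemma vnormA_add_sq_add_vnormA_sub_sq (hA : A.IsPositive) (x y : H) :
    vnormA A (x + y) ^ 2 + vnormA A (x - y) ^ 2 = 2 * (vnormA A x ^ 2 + vnormA A y ^ 2) := by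
  obtain ⟨B, -, hnorm⟩ := hA.exists_innA_eq_inner
  simp only [hnorm, map_add, map_sub]
  linarith [parallelogram_law_with_norm ℂ (B x) (B y)]

lemma innA_apply_smul_apply_smul (V : H →L[ℂ] H) (c : ℂ) (x : H) :
    innA A (V (c • x)) (c • x) = (starRingEnd ℂ c * c) * innA A (V x) x := by
  simp only [innA, map_smul, inner_smul_left, inner_smul_right]
  ring

lemma wA_nonneg (T : H →L[ℂ] H) : 0 ≤ wA A T :=
  Real.sSup_nonneg (by rintro _ ⟨x, -, rfl⟩; exact norm_nonneg _)

end InnerA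

namespace IsAAdjoint

variable {A T S T' S' R D : H →L[ℂ] H}

lemma innA_apply_left (h : IsAAdjoint A T S) (x y : H) : innA A (S x) y = innA A x (T y) := by
  rw [innA, innA, ← comp_apply, h, comp_apply, adjoint_inner_left]

lemma innA_apply_self (hA : IsSelfAdjoint A) (h : IsAAdjoint A T S) (x : H) :
    innA A (S x) x = starRingEnd ℂ (innA A (T x) x) := by
  rw [h.innA_apply_left, innA_conj_symm hA]

lemma symm (hA : IsSelfAdjoint A) (h : IsAAdjoint A T S) : IsAAdjoint A S T := by
  have := congrArg adjoint h
  rw [adjoint_comp, adjoint_comp, adjoint_adjoint, hA.adjoint_eq] at this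
  exact this.symm

lemma add (h : IsAAdjoint A T S) (h' : IsAAdjoint A T' S') : IsAAdjoint A (T + T') (S + S') := by
  rw [IsAAdjoint, comp_add, h, h', map_add, add_comp]

lemma mul (h : IsAAdjoint A T S) (h' : IsAAdjoint A T' S') : IsAAdjoint A (T * T') (S' * S) := by
  rw [IsAAdjoint, mul_def, mul_def, ← comp_assoc, h', comp_assoc, h, ← comp_assoc, ← adjoint_comp]

lemma smul (h : IsAAdjoint A T S) (c : ℂ) : IsAAdjoint A (c • T) (starRingEnd ℂ c • S) := by
  rw [IsAAdjoint, comp_smul, h, LinearIsometryEquiv.map_smulₛₗ, smul_comp]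

lemma pow (h : IsAAdjoint A T S) : ∀ n : ℕ, IsAAdjoint A (T ^ n) (S ^ n)
  | 0 => by simp [IsAAdjoint, one_def, adjoint_id]
  | n + 1 => by rw [pow_succ, pow_succ']; exact (h.pow n).mul h

lemma vnormA_apply_sq (hA : A.IsPositive) (h : IsAAdjoint A T S) (x : H) :
    vnormA A (T x) ^ 2 = (innA A ((S * T) x) x).re := by
  rw [vnormA_sq hA, mul_apply_eq_comp, h.innA_apply_left]

lemma vnormA_apply_sq_le (hA : A.IsPositive) (h : IsAAdjoint A T S) (x : H) :
    vnormA A (T x) ^ 2 ≤ vnormA A ((S * T) x) * vnormA A x :=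
  (h.vnormA_apply_sq hA x).le.trans ((re_le_norm _).trans (norm_innA_le hA _ _))

lemma vnormA_apply_pow_two_pow_le (hA : A.IsPositive) (hR : IsAAdjoint A R R) {x : H}
    (hx : vnormA A x = 1) (n : ℕ) : vnormA A (R x) ^ 2 ^ n ≤ vnormA A ((R ^ 2 ^ n) x) := by
  induction n with
  | zero => simp
  | succ n ih => calc
      vnormA A (R x) ^ 2 ^ (n + 1) = (vnormA A (R x) ^ 2 ^ n) ^ 2 := by rw [pow_succ, pow_mul]
      _ ≤ vnormA A ((R ^ 2 ^ n) x) ^ 2 := by gcongr; exact pow_nonneg (vnormA_nonneg _) _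
      _ ≤ vnormA A ((R ^ 2 ^ n * R ^ 2 ^ n) x) * vnormA A x := (hR.pow _).vnormA_apply_sq_le hA x
      _ = vnormA A ((R ^ 2 ^ (n + 1)) x) := by rw [hx, mul_one, ← pow_add, ← two_mul, pow_succ']

lemma vnormA_apply_le_norm (hA : A.IsPositive) (hR : IsAAdjoint A R R) {x : H}
    (hx : vnormA A x = 1) : vnormA A (R x) ≤ ‖R‖ :=
  le_of_forall_pow_two_pow_le_mul (norm_nonneg _) fun n => calc
    vnormA A (R x) ^ 2 ^ n ≤ vnormA A ((R ^ 2 ^ n) x) := hR.vnormA_apply_pow_two_pow_le hA hx n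
    _ ≤ √‖A‖ * ‖(R ^ 2 ^ n) x‖ := vnormA_le_sqrt_norm_mul_norm _
    _ ≤ √‖A‖ * (‖R‖ ^ 2 ^ n * ‖x‖) := by
      gcongr
      exact ((R ^ 2 ^ n).le_opNorm x).trans (by gcongr; exact norm_pow_le' R (by positivity))
    _ = √‖A‖ * ‖x‖ * ‖R‖ ^ 2 ^ n := by ring

lemma vnormA_apply_le_sqrt_norm (hA : A.IsPositive) (h : IsAAdjoint A T S) {x : H}
    (hx : vnormA A x = 1) : vnormA A (T x) ≤ √‖S * T‖ := by
  refine Real.le_sqrt_of_sq_le ?_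
  calc vnormA A (T x) ^ 2 ≤ vnormA A ((S * T) x) * vnormA A x := h.vnormA_apply_sq_le hA x
    _ ≤ ‖S * T‖ := by
      rw [hx, mul_one]
      exact ((h.symm hA.isSelfAdjoint).mul h).vnormA_apply_le_norm hA hx

lemma bddAbove_vnormA (hA : A.IsPositive) (h : IsAAdjoint A T S) :
    BddAbove {r : ℝ | ∃ x : H, vnormA A x = 1 ∧ r = vnormA A (T x)} := by
  refine ⟨√‖S * T‖, ?_⟩
  rintro _ ⟨x, hx, rfl⟩
  exact h.vnormA_apply_le_sqrt_norm hA hx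

lemma bddAbove_norm_innA (hA : A.IsPositive) (h : IsAAdjoint A T S) :
    BddAbove {r : ℝ | ∃ x : H, vnormA A x = 1 ∧ r = ‖innA A (T x) x‖} := by
  refine ⟨√‖S * T‖, ?_⟩
  rintro _ ⟨x, hx, rfl⟩
  calc ‖innA A (T x) x‖ ≤ vnormA A (T x) * vnormA A x := norm_innA_le hA _ _
    _ ≤ √‖S * T‖ := by rw [hx, mul_one]; exact h.vnormA_apply_le_sqrt_norm hA hx

lemma vnormA_apply_le_opNormA' (hA : A.IsPositive) (h : IsAAdjoint A T S) {x : H}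
    (hx : vnormA A x = 1) : vnormA A (T x) ≤ opNormA' A T :=
  le_csSup (h.bddAbove_vnormA hA) ⟨x, hx, rfl⟩

lemma norm_innA_apply_self_le_wA (hA : A.IsPositive) (h : IsAAdjoint A T S) {x : H}
    (hx : vnormA A x = 1) : ‖innA A (T x) x‖ ≤ wA A T :=
  le_csSup (h.bddAbove_norm_innA hA) ⟨x, hx, rfl⟩

lemma norm_innA_apply_self_le_wA_mul (hA : A.IsPositive) (h : IsAAdjoint A T S) (x : H) :
    ‖innA A (T x) x‖ ≤ wA A T * vnormA A x ^ 2 := by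
  obtain hx | hx := (vnormA_nonneg (A := A) x).eq_or_lt
  · simpa [← hx] using norm_innA_le hA (T x) x
  set c : ℂ := (((vnormA A x)⁻¹ : ℝ) : ℂ)
  have hc : ‖c‖ = (vnormA A x)⁻¹ := by simp [c, hx.le]
  have hunit : vnormA A (c • x) = 1 := by rw [vnormA_smul hA, hc, inv_mul_cancel₀ hx.ne']
  have := h.norm_innA_apply_self_le_wA hA hunit
  rw [innA_apply_smul_apply_smul, norm_mul, norm_mul, Complex.norm_conj, hc] at this
  rw [← div_le_iff₀ (by positivity)]
  field_simp at this ⊢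
  linarith

lemma four_mul_re_innA (hA : IsSelfAdjoint A) (hD : IsAAdjoint A D D) (x y : H) :
    4 * (innA A (D x) y).re =
      (innA A (D (x + y)) (x + y)).re - (innA A (D (x - y)) (x - y)).re := by
  have hyx : innA A (D y) x = starRingEnd ℂ (innA A (D x) y) := by
    rw [hD.innA_apply_left, innA_conj_symm hA]
  simp only [innA, map_add, map_sub, inner_add_left, inner_add_right, inner_sub_left,
    inner_sub_right] at hyx ⊢
  simp only [hyx, sub_re, add_re, conj_re]
  ring

lemma vnormA_apply_le_of_norm_innA_le (hA : A.IsPositive) (hD : IsAAdjoint A D D) {M : ℝ}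
    (hM : ∀ y, ‖innA A (D y) y‖ ≤ M * vnormA A y ^ 2) {x : H} (hx : vnormA A x = 1) :
    vnormA A (D x) ≤ M := by
  obtain ⟨m, hm⟩ : ∃ m, vnormA A (D x) = m := ⟨_, rfl⟩
  have hM0 : 0 ≤ M := by simpa [hx] using (norm_nonneg _).trans (hM x)
  have hbound : ∀ y, (innA A (D y) y).re ≤ M * vnormA A y ^ 2 := fun y =>
    (re_le_norm _).trans (hM y)
  have hbound' : ∀ y, -(innA A (D y) y).re ≤ M * vnormA A y ^ 2 := fun y =>
    (neg_le_abs _).trans ((abs_re_le_norm _).trans (hM y))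
  -- polarize with `m • x` and `D x`, whose `A`-seminorms both equal `m`
  have hmx : vnormA A ((m : ℂ) • x) = m := by
    rw [vnormA_smul hA, hx, mul_one, norm_real, Real.norm_of_nonneg (hm ▸ vnormA_nonneg _)]
  have hre : (innA A (D ((m : ℂ) • x)) (D x)).re = m ^ 3 := by
    have : innA A (D ((m : ℂ) • x)) (D x) = m * innA A (D x) (D x) := by
      simp [innA]
    rw [this, innA_self hA, hm, ← ofReal_mul, ofReal_re]
    ring
  have key : 4 * m ^ 3 ≤ 4 * M * m ^ 2 := by
    have hpar := vnormA_add_sq_add_vnormA_sub_sq hA ((m : ℂ) • x) (D x)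
    rw [hmx, hm] at hpar
    rw [← hre, hD.four_mul_re_innA hA.isSelfAdjoint]
    have := congrArg (M * ·) hpar
    simp only [mul_add] at this
    linarith [hbound ((m : ℂ) • x + D x), hbound' ((m : ℂ) • x - D x)]
  rw [hm]
  obtain rfl | hm0 := (hm ▸ vnormA_nonneg (D x) : 0 ≤ m).eq_or_lt
  · exact hM0
  · nlinarith [pow_pos hm0 2]

lemma norm_innA_apply_self_sq_le (hA : A.IsPositive) (hR : IsAAdjoint A R R) {x : H}
    (hx : vnormA A x = 1) : ‖innA A (R x) x‖ ^ 2 ≤ (innA A ((R * R) x) x).re := calc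
  ‖innA A (R x) x‖ ^ 2 ≤ (vnormA A (R x) * vnormA A x) ^ 2 := by
    gcongr; exact norm_innA_le hA _ _
  _ = (innA A ((R * R) x) x).re := by rw [hx, mul_one, hR.vnormA_apply_sq hA]

lemma norm_innA_apply_self_pow_four_le (hA : A.IsPositive) (hR : IsAAdjoint A R R) {x : H}
    (hx : vnormA A x = 1) : ‖innA A (R x) x‖ ^ 4 ≤ (innA A ((R * R * (R * R)) x) x).re := by
  have h2 := hR.norm_innA_apply_self_sq_le hA hx
  calc ‖innA A (R x) x‖ ^ 4 = (‖innA A (R x) x‖ ^ 2) ^ 2 := by ring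
    _ ≤ (innA A ((R * R) x) x).re ^ 2 := by gcongr
    _ ≤ ‖innA A ((R * R) x) x‖ ^ 2 := by gcongr; exacts [(sq_nonneg _).trans h2, re_le_norm _]
    _ ≤ _ := (hR.mul hR).norm_innA_apply_self_sq_le hA hx

lemma conj_smul_add_smul (hA : IsSelfAdjoint A) (h : IsAAdjoint A T S) (c : ℂ) :
    IsAAdjoint A (starRingEnd ℂ c • T + c • S) (starRingEnd ℂ c • T + c • S) := by
  have := (h.smul (starRingEnd ℂ c)).add ((h.symm hA).smul c)
  rwa [conj_conj, add_comm (c • S)] at this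

lemma innA_conj_smul_add_smul_apply_self (hA : IsSelfAdjoint A) (h : IsAAdjoint A T S) (c : ℂ)
    (x : H) :
    innA A ((starRingEnd ℂ c • T + c • S) x) x = ((2 * (c * innA A (T x) x).re : ℝ) : ℂ) := by
  have hS := h.innA_apply_self hA x
  simp only [innA, add_apply, smul_apply, map_add, map_smul, inner_add_left, inner_smul_left,
    conj_conj] at hS ⊢
  rw [hS, ← map_mul, add_conj]

lemma norm_innA_conj_smul_add_smul_apply_self_le (hA : IsSelfAdjoint A) (h : IsAAdjoint A T S)
    {c : ℂ} (hc : ‖c‖ = 1) (x : H) :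
    ‖innA A ((starRingEnd ℂ c • T + c • S) x) x‖ ≤ 2 * ‖innA A (T x) x‖ := by
  rw [h.innA_conj_smul_add_smul_apply_self hA, norm_real, Real.norm_eq_abs, abs_mul, abs_two]
  gcongr
  exact (abs_re_le_norm _).trans (by rw [norm_mul, hc, one_mul])

lemma vnormA_conj_smul_add_smul_apply_le (hA : A.IsPositive) (h : IsAAdjoint A T S) {c : ℂ}
    (hc : ‖c‖ = 1) {x : H} (hx : vnormA A x = 1) :
    vnormA A ((starRingEnd ℂ c • T + c • S) x) ≤ 2 * wA A T :=
  (h.conj_smul_add_smul hA.isSelfAdjoint c).vnormA_apply_le_of_norm_innA_le hA (fun y => calc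
    _ ≤ 2 * ‖innA A (T y) y‖ := h.norm_innA_conj_smul_add_smul_apply_self_le hA.isSelfAdjoint hc y
    _ ≤ 2 * (wA A T * vnormA A y ^ 2) := by gcongr; exact h.norm_innA_apply_self_le_wA_mul hA y
    _ = 2 * wA A T * vnormA A y ^ 2 := by ring) hx

lemma re_innA_conj_smul_add_smul_apply_self_le (hA : A.IsPositive) (h : IsAAdjoint A T S)
    {c : ℂ} (hc : ‖c‖ = 1) {x : H} (hx : vnormA A x = 1) :
    (innA A ((starRingEnd ℂ c • T + c • S) x) x).re ≤ 2 * wA A T := calc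
  _ ≤ 2 * ‖innA A (T x) x‖ :=
    (re_le_norm _).trans (h.norm_innA_conj_smul_add_smul_apply_self_le hA.isSelfAdjoint hc x)
  _ ≤ 2 * wA A T := by gcongr; exact h.norm_innA_apply_self_le_wA hA hx

end IsAAdjoint

lemma IsAAdjoint.sixteen_mul_norm_innA_apply_self_pow_four_le {A T S : H →L[ℂ] H}
    (hA : A.IsPositive) (hS : IsAAdjoint A T S) {x : H} (hx : vnormA A x = 1) :
    16 * ‖innA A (T x) x‖ ^ 4 ≤ 4 * wA A (T ^ 2) ^ 2 +
      2 * wA A (T ^ 2 * (S * T + T * S) + (S * T + T * S) * T ^ 2) +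
      opNormA' A (S * T + T * S) ^ 2 := by
  have hA' := hA.isSelfAdjoint
  set P := S * T + T * S
  have hP : IsAAdjoint A P P := ((hS.symm hA').mul hS).add (hS.mul (hS.symm hA'))
  have hT2 : IsAAdjoint A (T ^ 2) (S ^ 2) := hS.pow 2
  have hX : IsAAdjoint A (T ^ 2 * P + P * T ^ 2) (P * S ^ 2 + S ^ 2 * P) :=
    (hT2.mul hP).add (hP.mul hT2)
  obtain ⟨c, hc, hct⟩ := RCLike.exists_norm_eq_mul_self (innA A (T x) x)
  set R := starRingEnd ℂ c • T + c • S
  set D := starRingEnd ℂ (c ^ 2) • T ^ 2 + c ^ 2 • S ^ 2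
  have hR : IsAAdjoint A R R := hS.conj_smul_add_smul hA' c
  have hD : IsAAdjoint A D D := hT2.conj_smul_add_smul hA' (c ^ 2)
  have hRx : ‖innA A (R x) x‖ = 2 * ‖innA A (T x) x‖ := by
    rw [hS.innA_conj_smul_add_smul_apply_self hA', ← hct]
    simp
  have hc2 : ‖c ^ 2‖ = 1 := by rw [norm_pow, hc, one_pow]
  have hRR : R * R = D + P := conj_smul_add_smul_mul_self hc T S
  have hR4 : R * R * (R * R) = D * D + (D * P + P * D) + P * P := by
    rw [hRR]
    noncomm_ring
  have hDP : D * P + P * D = starRingEnd ℂ (c ^ 2) • (T ^ 2 * P + P * T ^ 2) +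
      c ^ 2 • (P * S ^ 2 + S ^ 2 * P) := by
    simp only [D, add_mul, mul_add, smul_mul_assoc, mul_smul_comm, smul_add]
    abel
  have hDx : vnormA A (D x) ≤ 2 * wA A (T ^ 2) := hT2.vnormA_conj_smul_add_smul_apply_le hA hc2 hx
  have hDPx : (innA A ((D * P + P * D) x) x).re ≤ 2 * wA A (T ^ 2 * P + P * T ^ 2) := by
    rw [hDP]
    exact hX.re_innA_conj_smul_add_smul_apply_self_le hA hc2 hx
  have hPx : vnormA A (P x) ≤ opNormA' A P := hP.vnormA_apply_le_opNormA' hA hx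
  calc 16 * ‖innA A (T x) x‖ ^ 4 = ‖innA A (R x) x‖ ^ 4 := by rw [hRx]; ring
    _ ≤ (innA A ((R * R * (R * R)) x) x).re := hR.norm_innA_apply_self_pow_four_le hA hx
    _ = vnormA A (D x) ^ 2 + (innA A ((D * P + P * D) x) x).re + vnormA A (P x) ^ 2 := by
      rw [hR4, hD.vnormA_apply_sq hA, hP.vnormA_apply_sq hA]
      simp only [innA, add_apply, map_add, inner_add_left, add_re]
    _ ≤ (2 * wA A (T ^ 2)) ^ 2 + 2 * wA A (T ^ 2 * P + P * T ^ 2) + opNormA' A P ^ 2 := by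
      gcongr <;> exact vnormA_nonneg _
    _ = _ := by ring

theorem stmt12 (A T S : H →L[ℂ] H) (hA : StrictPos A) (hS : IsAAdjoint A T S) :
    (wA A T)^4 ≤ (1/4) * (wA A (T^2))^2 +
      (1/8) * wA A (T^2 * (S * T + T * S) + (S * T + T * S) * T^2) +
      (1/16) * (opNormA' A (S * T + T * S))^2 := by
  refine sSup_pow_le_of_forall_pow_le four_ne_zero ?_ ?_
  · have := wA_nonneg (A := A) (T ^ 2 * (S * T + T * S) + (S * T + T * S) * T ^ 2)
    positivity
  · rintro _ ⟨x, hx, rfl⟩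
    refine ⟨norm_nonneg _, ?_⟩
    linarith [hS.sixteen_mul_norm_innA_apply_self_pow_four_le hA.1 hx]
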